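/- arXiv:2002.08086 — 13 statements merged into one kernel-verified Lean document; each statement's English description precedes it below -/
import Mathlib

section
/- Let G be a group in which commensurable elements commute and which is torsion-free with unique roots (g^n = h^n for n ≠ 0 implies g = h). If g, h ∈ G are commensurable (there exist nonzero integers p, q with g^p = h^q), then the subgroup generated by g and h is cyclic. -/
/-!
Dividing the exponents by `d = gcd(p, q)` and taking `d`-th roots gives `g ^ p' = h ^ q'` with
`p', q'` coprime. If `u p' + v q' = 1`, then for the commuting elements `g, h` the element
`a = g ^ v * h ^ u` satisfies `a ^ q' = g ^ (v q') (g ^ p') ^ u = g` and symmetrically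
`a ^ p' = h`, so `a` generates `⟨g, h⟩`.
-/

namespace Subgroup

variable {G : Type*} [Group G]

theorem closure_pair_eq_zpowers {g h a : G} (ha : a ∈ closure {g, h})
    (hg : g ∈ zpowers a) (hh : h ∈ zpowers a) : closure {g, h} = zpowers a := by
  refine le_antisymm ?_ ((zpowers_le).mpr ha)
  rw [closure_le, Set.insert_subset_iff, Set.singleton_subset_iff]
  exact ⟨hg, hh⟩

end Subgroup

namespace Commute

variable {G : Type*} [Group G] {g h : G} {p q u v : ℤ}

theorem zpow_mul_zpow_zpow_eq_left (hc : Commute g h) (huv : u * p + v * q = 1)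
    (hgh : g ^ p = h ^ q) : (g ^ v * h ^ u) ^ q = g := by
  calc (g ^ v * h ^ u) ^ q = g ^ (v * q) * (h ^ q) ^ u := by
        rw [(hc.zpow_zpow v u).mul_zpow, ← zpow_mul, ← zpow_mul, ← zpow_mul, mul_comm u q]
    _ = g ^ (u * p + v * q) := by rw [← hgh, ← zpow_mul, ← zpow_add, mul_comm p u, add_comm]
    _ = g := by rw [huv, zpow_one]

theorem zpow_mul_zpow_zpow_eq_right (hc : Commute g h) (huv : u * p + v * q = 1)
    (hgh : g ^ p = h ^ q) : (g ^ v * h ^ u) ^ p = h := by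
  calc (g ^ v * h ^ u) ^ p = (g ^ p) ^ v * h ^ (u * p) := by
        rw [(hc.zpow_zpow v u).mul_zpow, ← zpow_mul, ← zpow_mul, ← zpow_mul, mul_comm v p]
    _ = h ^ (u * p + v * q) := by rw [hgh, ← zpow_mul, ← zpow_add, mul_comm q v, add_comm]
    _ = h := by rw [huv, zpow_one]

theorem exists_closure_pair_eq_zpowers_of_isCoprime (hc : Commute g h) (hpq : IsCoprime p q)
    (hgh : g ^ p = h ^ q) : ∃ a : G, Subgroup.closure {g, h} = Subgroup.zpowers a := by
  obtain ⟨u, v, huv⟩ := hpq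
  refine ⟨g ^ v * h ^ u, Subgroup.closure_pair_eq_zpowers ?_ ?_ ?_⟩
  · exact mul_mem (zpow_mem (Subgroup.subset_closure (by simp)) v)
      (zpow_mem (Subgroup.subset_closure (by simp)) u)
  · exact ⟨q, hc.zpow_mul_zpow_zpow_eq_left huv hgh⟩
  · exact ⟨p, hc.zpow_mul_zpow_zpow_eq_right huv hgh⟩

end Commute

theorem stmt0_general {G : Type*} [Group G]
    (hcomm : ∀ a b : G, (∃ p q : ℤ, p ≠ 0 ∧ q ≠ 0 ∧ a ^ p = b ^ q) → Commute a b)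
    (hroots : ∀ a b : G, ∀ n : ℤ, n ≠ 0 → a ^ n = b ^ n → a = b)
    (g h : G) (p q : ℤ) (hp : p ≠ 0) (hq : q ≠ 0) (hgh : g ^ p = h ^ q) :
    ∃ a : G, Subgroup.closure {g, h} = Subgroup.zpowers a := by
  have hc : Commute g h := hcomm g h ⟨p, q, hp, hq, hgh⟩
  obtain ⟨d, p', q', hd, hcop, rfl, rfl⟩ := Int.exists_gcd_one' (Int.gcd_pos_of_ne_zero_left q hp)
  have hroot : g ^ p' = h ^ q' := by
    refine hroots _ _ d (by positivity) ?_
    rwa [← zpow_mul, ← zpow_mul]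
  exact hc.exists_closure_pair_eq_zpowers_of_isCoprime
    (Int.isCoprime_iff_gcd_eq_one.mpr hcop) hroot

/-- If in a torsion-free group with unique roots, commensurable elements commute,
then two commensurable elements generate a cyclic subgroup. -/
theorem stmt0 {G : Type*} [Group G]
    (hcomm : ∀ a b : G, (∃ p q : ℤ, p ≠ 0 ∧ q ≠ 0 ∧ a ^ p = b ^ q) → Commute a b)
    (htf : ∀ a : G, a ≠ 1 → ∀ n : ℤ, n ≠ 0 → a ^ n ≠ 1)
    (hroots : ∀ a b : G, ∀ n : ℤ, n ≠ 0 → a ^ n = b ^ n → a = b)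
    (g h : G) (p q : ℤ) (hp : p ≠ 0) (hq : q ≠ 0) (hgh : g ^ p = h ^ q) :
    ∃ a : G, Subgroup.closure {g, h} = Subgroup.zpowers a :=
  stmt0_general hcomm hroots g h p q hp hq hgh
end

section
/- Let G be a torsion-free group with the unique roots property in which commensurable elements commute, and let U ⊆ G be a finite set of pairwise commensurable elements. Then the subgroup ⟨U⟩ generated by U is cyclic. -/
/-!
The subgroup `H = ⟨U⟩` is abelian, since its generators pairwise commute. Fixing `g ∈ U`, every
`u ∈ U` has a nonzero power in `⟨g⟩`, so a common nonzero exponent `n` sends all of `U`, hence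
all of `H`, into the cyclic group `⟨g⟩`. On the abelian group `H` the map `x ↦ xⁿ` is a
homomorphism, injective by uniqueness of roots, so `H` embeds into `⟨g⟩` and is cyclic.
-/

open Subgroup

section

variable {G : Type*} [Group G]

theorem Finset.exists_zpow_mem_of_forall_exists {H : Subgroup G} (s : Finset G)
    (hs : ∀ x ∈ s, ∃ n : ℤ, n ≠ 0 ∧ x ^ n ∈ H) : ∃ n : ℤ, n ≠ 0 ∧ ∀ x ∈ s, x ^ n ∈ H := by
  choose! e he hmem using hs
  refine ⟨∏ x ∈ s, e x, Finset.prod_ne_zero_iff.mpr he, fun x hx => ?_⟩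
  obtain ⟨k, hk⟩ := Finset.dvd_prod_of_mem e hx
  rw [hk, zpow_mul]
  exact H.zpow_mem (hmem x hx) k

namespace Subgroup

theorem zpow_mem_of_mem_closure {U : Set G} [IsMulCommutative (closure U)] {K : Subgroup G}
    {n : ℤ} (hUK : ∀ u ∈ U, u ^ n ∈ K) {x : G} (hx : x ∈ closure U) : x ^ n ∈ K := by
  induction hx using closure_induction with
  | mem u hu => exact hUK u hu
  | one => simp
  | mul x y hx hy hxK hyK =>
    rw [Commute.mul_zpow (setLike_mul_comm hx hy)]
    exact K.mul_mem hxK hyK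
  | inv x _ hxK => simpa [inv_zpow] using K.inv_mem hxK

open scoped IsMulCommutative in
theorem isCyclic_of_zpow_injOn {H K : Subgroup G} [IsMulCommutative H] [IsCyclic K] {n : ℤ}
    (hinj : Set.InjOn (· ^ n) (H : Set G)) (hHK : ∀ x ∈ H, x ^ n ∈ K) : IsCyclic H :=
  isCyclic_of_injective ((H.subtype.comp (zpowGroupHom n)).codRestrict K fun x => hHK x x.2)
    fun x y hxy => Subtype.ext <| hinj x.2 y.2 (congrArg Subtype.val hxy)

end Subgroup

end

theorem stmt1_general {G : Type*} [Group G]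
    (hcomm : ∀ a b : G, (∃ p q : ℤ, p ≠ 0 ∧ q ≠ 0 ∧ a ^ p = b ^ q) → Commute a b)
    (hroots : ∀ a b : G, ∀ n : ℤ, n ≠ 0 → a ^ n = b ^ n → a = b)
    (U : Finset G)
    (hU : ∀ g ∈ U, ∀ h ∈ U, ∃ p q : ℤ, p ≠ 0 ∧ q ≠ 0 ∧ g ^ p = h ^ q) :
    ∃ a : G, Subgroup.closure (U : Set G) = Subgroup.zpowers a := by
  rcases U.eq_empty_or_nonempty with rfl | ⟨g, hg⟩
  · exact ⟨1, by simp⟩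
  have : IsMulCommutative (closure (U : Set G)) :=
    isMulCommutative_closure fun a ha b hb => (hcomm a b (hU a ha b hb)).eq
  obtain ⟨n, hn, hnU⟩ := U.exists_zpow_mem_of_forall_exists (H := zpowers g) fun u hu => by
    obtain ⟨p, q, hp, -, hpq⟩ := hU u hu g hg
    exact ⟨p, hp, hpq ▸ zpow_mem_zpowers g q⟩
  have : IsCyclic (closure (U : Set G)) :=
    isCyclic_of_zpow_injOn (fun a _ b _ => hroots a b n hn) fun x => zpow_mem_of_mem_closure hnU
  obtain ⟨a, ha⟩ := (closure (U : Set G)).isCyclic_iff_exists_zpowers_eq_top.mp this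
  exact ⟨a, ha.symm⟩

/-- In a torsion-free group with unique roots in which commensurable elements commute,
a finite set of pairwise commensurable elements generates a cyclic subgroup. -/
theorem stmt1 {G : Type*} [Group G]
    (hcomm : ∀ a b : G, (∃ p q : ℤ, p ≠ 0 ∧ q ≠ 0 ∧ a ^ p = b ^ q) → Commute a b)
    (htf : ∀ a : G, a ≠ 1 → ∀ n : ℤ, n ≠ 0 → a ^ n ≠ 1)
    (hroots : ∀ a b : G, ∀ n : ℤ, n ≠ 0 → a ^ n = b ^ n → a = b)
    (U : Finset G)
    (hU : ∀ g ∈ U, ∀ h ∈ U, ∃ p q : ℤ, p ≠ 0 ∧ q ≠ 0 ∧ g ^ p = h ^ q) :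
    ∃ a : G, Subgroup.closure (U : Set G) = Subgroup.zpowers a :=
  stmt1_general hcomm hroots U hU
end

section
/- Let G be a torsion-free group and g₁, g₂ ∈ G with g₁ ≠ 1. Then the subgroup S₁ = {(x, y) ∈ ℤ² : g₁^x g₂^y = 1} of ℤ² is cyclic, i.e., generated by a single element. -/
/-!
If `g₁ ^ x * g₂ ^ y = 1`, then `g₂ ^ y` is a power of `g₁`, and these relations form a subgroup
of `ℤ²`. When `g₁` has infinite order, `x` is determined by `y`, so the projection to the second
coordinate embeds this subgroup into `ℤ`; hence it is cyclic.
-/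

section

variable {G : Type*} [Group G]

def zpowRelations (g₁ g₂ : G) : AddSubgroup (ℤ × ℤ) where
  carrier := {p | g₁ ^ p.1 * g₂ ^ p.2 = 1}
  zero_mem' := by simp
  add_mem' {a b} ha hb := by
    change g₁ ^ a.1 * g₂ ^ a.2 = 1 at ha
    change g₁ ^ b.1 * g₂ ^ b.2 = 1 at hb
    change g₁ ^ (a.1 + b.1) * g₂ ^ (a.2 + b.2) = 1
    rw [zpow_add, add_comm a.2, zpow_add, mul_assoc, ← mul_assoc (g₁ ^ b.1), hb, one_mul, ha]
  neg_mem' {a} ha := by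
    change g₁ ^ a.1 * g₂ ^ a.2 = 1 at ha
    change g₁ ^ (-a.1) * g₂ ^ (-a.2) = 1
    rw [zpow_neg, zpow_neg, ← mul_inv_rev, inv_eq_one, eq_inv_of_mul_eq_one_left ha,
      mul_inv_cancel]

theorem mem_zpowRelations {g₁ g₂ : G} {p : ℤ × ℤ} :
    p ∈ zpowRelations g₁ g₂ ↔ g₁ ^ p.1 * g₂ ^ p.2 = 1 :=
  Iff.rfl

theorem snd_injective_on_zpowRelations {g₁ : G} (hg₁ : ¬IsOfFinOrder g₁) (g₂ : G) :
    Function.Injective ((AddMonoidHom.snd ℤ ℤ).comp (zpowRelations g₁ g₂).subtype) := by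
  rw [injective_iff_map_eq_zero]
  rintro ⟨⟨x, y⟩, hxy⟩ (hy : y = 0)
  subst hy
  rw [mem_zpowRelations, zpow_zero, mul_one, ← zpow_zero g₁] at hxy
  exact Subtype.ext (Prod.ext (injective_zpow_iff_not_isOfFinOrder.mpr hg₁ hxy) rfl)

theorem exists_zpowRelations_eq_zmultiples {g₁ : G} (hg₁ : ¬IsOfFinOrder g₁) (g₂ : G) :
    ∃ v : ℤ × ℤ, AddSubgroup.zmultiples v = zpowRelations g₁ g₂ :=
  (AddSubgroup.isAddCyclic_iff_exists_zmultiples_eq_top _).mp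
    (isAddCyclic_of_injective _ (snd_injective_on_zpowRelations hg₁ g₂))

end

/-- In a torsion-free group, if `g₁ ≠ 1`, the solution set of `g₁^x g₂^y = 1`
is a cyclic subgroup of `ℤ²`. -/
theorem stmt3 {G : Type*} [Group G]
    (htf : ∀ a : G, a ≠ 1 → ∀ n : ℤ, n ≠ 0 → a ^ n ≠ 1)
    (g₁ g₂ : G) (hg₁ : g₁ ≠ 1) :
    ∃ v : ℤ × ℤ,
      {p : ℤ × ℤ | g₁ ^ p.1 * g₂ ^ p.2 = 1} =
        (AddSubgroup.zmultiples v : Set (ℤ × ℤ)) := by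
  have hinf : ¬IsOfFinOrder g₁ := by
    rw [isOfFinOrder_iff_zpow_eq_one]
    rintro ⟨n, hn, hpow⟩
    exact htf g₁ hg₁ n hn hpow
  obtain ⟨v, hv⟩ := exists_zpowRelations_eq_zmultiples hinf g₂
  exact ⟨v, congrArg SetLike.coe hv.symm⟩
end

section
/- For vectors a, b ∈ ℤⁿ \ {0} there exist integers s, t with |s| ≤ ‖b‖∞ and |t| ≤ ‖a‖∞ such that {(x, y) ∈ ℤ² : x • a = y • b} equals the cyclic subgroup of ℤ² generated by (s, t). -/
/-!
The second coordinates of the solutions of `x • a = y • b` form a subgroup `tℤ` of `ℤ`, and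
since `ℤⁿ` is torsion-free and `a ≠ 0`, `y` determines `x`; so the solutions are the
multiples of one solution `(s, t)`. If `t ≠ 0` that solution is primitive, i.e. `s` and `t`
are coprime, and then `s a = t b` forces `t ∣ aᵢ` and `s ∣ bᵢ` for every coordinate.
-/

open Finset AddSubgroup

variable {M : Type*} [AddCommGroup M] [IsAddTorsionFree M] {a b : M} {s t : ℤ}

theorem exists_forall_zsmul_eq_zsmul_iff (ha : a ≠ 0) (b : M) :
    ∃ s t : ℤ, ∀ x y : ℤ, x • a = y • b ↔ ∃ k : ℤ, x = k * s ∧ y = k * t := by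
  obtain ⟨t, ht⟩ := Int.subgroup_cyclic ((zmultiples a).comap (zmultiplesHom M b))
  rw [← zmultiples_eq_closure] at ht
  have hmem (y : ℤ) : (∃ x : ℤ, x • a = y • b) ↔ ∃ k : ℤ, k * t = y := by
    simpa [mem_zmultiples_iff] using SetLike.ext_iff.mp ht y
  obtain ⟨s, hs⟩ := (hmem t).2 ⟨1, one_mul t⟩
  refine ⟨s, t, fun x y => ⟨fun hxy => ?_, ?_⟩⟩
  · obtain ⟨k, rfl⟩ := (hmem y).1 ⟨x, hxy⟩
    refine ⟨k, smul_left_injective ℤ ha ?_, rfl⟩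
    simp only [hxy, mul_smul, hs]
  · rintro ⟨k, rfl, rfl⟩
    rw [mul_smul, mul_smul, hs]

theorem isCoprime_of_forall_zsmul_eq_zsmul_iff (ht : t ≠ 0)
    (h : ∀ x y : ℤ, x • a = y • b ↔ ∃ k : ℤ, x = k * s ∧ y = k * t) : IsCoprime s t := by
  refine isCoprime_of_dvd s t (fun hst => ht hst.2) fun z hz hz0 hzs hzt => hz ?_
  obtain ⟨s', hs'⟩ := hzs
  obtain ⟨t', ht'⟩ := hzt
  have hsol : z • s' • a = z • t' • b := by
    rw [← mul_smul, ← mul_smul, ← hs', ← ht']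
    exact (h s t).2 ⟨1, by simp, by simp⟩
  obtain ⟨k, -, hk⟩ := (h s' t').1 (smul_right_injective M hz0 hsol)
  refine IsUnit.of_mul_eq_one k (mul_right_cancel₀ ht ?_)
  rw [one_mul, mul_assoc, ← hk, ← ht']

theorem Int.natAbs_le_sup_natAbs_of_forall_dvd {ι : Type*} [Fintype ι] {v : ι → ℤ} {d : ℤ}
    (hv : v ≠ 0) (hd : ∀ i, d ∣ v i) : d.natAbs ≤ univ.sup fun i => (v i).natAbs := by
  obtain ⟨i, hi⟩ := Function.ne_iff.mp hv
  calc d.natAbs ≤ (v i).natAbs :=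
        Nat.le_of_dvd (Int.natAbs_pos.mpr hi) (Int.natAbs_dvd_natAbs.mpr (hd i))
    _ ≤ _ := le_sup (f := fun i => (v i).natAbs) (mem_univ i)

theorem stmt5_general {n : ℕ} (a b : Fin n → ℤ) (ha : a ≠ 0) :
    ∃ s t : ℤ,
      s.natAbs ≤ Finset.univ.sup (fun i => (b i).natAbs) ∧
      t.natAbs ≤ Finset.univ.sup (fun i => (a i).natAbs) ∧
      ∀ x y : ℤ, x • a = y • b ↔ ∃ k : ℤ, x = k * s ∧ y = k * t := by
  obtain ⟨s, t, hst⟩ := exists_forall_zsmul_eq_zsmul_iff ha b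
  have hsol : s • a = t • b := (hst s t).2 ⟨1, by simp, by simp⟩
  have hs0 (h : t • b = 0) : s = 0 := (smul_eq_zero.mp (hsol.trans h)).resolve_right ha
  rcases eq_or_ne t 0 with rfl | ht
  · obtain rfl := hs0 (zero_smul ℤ b)
    exact ⟨0, 0, Nat.zero_le _, Nat.zero_le _, hst⟩
  have hcop := isCoprime_of_forall_zsmul_eq_zsmul_iff ht hst
  have hcoord (i : Fin n) : s * a i = t * b i := by simpa using congrFun hsol i
  refine ⟨s, t, ?_, Int.natAbs_le_sup_natAbs_of_forall_dvd ha fun i =>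
    hcop.symm.dvd_of_dvd_mul_left ⟨b i, hcoord i⟩, hst⟩
  rcases eq_or_ne b 0 with rfl | hb
  · simp [hs0 (smul_zero t)]
  · exact Int.natAbs_le_sup_natAbs_of_forall_dvd hb fun i =>
      hcop.dvd_of_dvd_mul_left ⟨a i, (hcoord i).symm⟩

/-- For nonzero integer vectors `a, b ∈ ℤⁿ` the solution set of `x • a = y • b`
is generated by a single pair `(s, t)` with `|s| ≤ ‖b‖∞` and `|t| ≤ ‖a‖∞`. -/
theorem stmt5 {n : ℕ} (a b : Fin n → ℤ) (ha : a ≠ 0) (hb : b ≠ 0) :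
    ∃ s t : ℤ,
      s.natAbs ≤ Finset.univ.sup (fun i => (b i).natAbs) ∧
      t.natAbs ≤ Finset.univ.sup (fun i => (a i).natAbs) ∧
      ∀ x y : ℤ, x • a = y • b ↔ ∃ k : ℤ, x = k * s ∧ y = k * t :=
  stmt5_general a b ha
end

section
/- Let A be an abelian group and let f₁, …, f_m : ℕ → A be periodic functions with periods q₁, …, q_m respectively. If the sum f = f₁ + ⋯ + f_m satisfies f(t) = 0 for all t < q₁ + ⋯ + q_m, then f(t) = 0 for all t ∈ ℕ. -/
/-!
Induct on the number of summands. Writing `g` for the whole sum and `p` for the period of one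
summand, the differences `t ↦ fᵢ (t + p) - fᵢ t` of the other summands are still periodic with
periods `qᵢ`, and their sum is `t ↦ g (t + p) - g t`, which vanishes below `∑ qᵢ - p` because `g`
vanishes below `∑ qᵢ`. By induction `g` is then `p`-periodic, and a `p`-periodic function
vanishing on `[0, p)` vanishes everywhere.
-/

section

open Function Finset

variable {A : Type*} [AddCommGroup A]

theorem Function.Periodic.eq_zero_of_forall_lt {g : ℕ → A} {p : ℕ} (hg : Periodic g p)
    (hp : 0 < p) (h : ∀ t < p, g t = 0) (t : ℕ) : g t = 0 := by
  rw [← hg.map_mod_nat]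
  exact h _ (Nat.mod_lt t hp)

theorem Finset.sum_eq_zero_of_periodic_of_forall_lt_sum {ι : Type*} (s : Finset ι)
    (f : ι → ℕ → A) (q : ι → ℕ) (hq : ∀ i ∈ s, 0 < q i) (hper : ∀ i ∈ s, Periodic (f i) (q i))
    (h0 : ∀ t < ∑ i ∈ s, q i, ∑ i ∈ s, f i t = 0) (t : ℕ) : ∑ i ∈ s, f i t = 0 := by
  classical
  induction s using Finset.induction_on generalizing f t with
  | empty => simp
  | insert a s ha ih =>
    set g : ℕ → A := fun t => ∑ i ∈ insert a s, f i t
    have hsum_q : ∑ i ∈ insert a s, q i = q a + ∑ i ∈ s, q i := sum_insert ha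
    have hshift : ∀ t, ∑ i ∈ s, (f i (t + q a) - f i t) = g (t + q a) - g t := by
      intro t
      simp only [g, sum_insert ha, hper a (mem_insert_self a s) t, sum_sub_distrib]
      abel
    have hg : Periodic g (q a) := by
      intro t
      rw [← sub_eq_zero, ← hshift]
      refine ih (fun i t => f i (t + q a) - f i t) (fun i hi => hq i (mem_insert_of_mem hi))
        (fun i hi => ((hper i (mem_insert_of_mem hi)).add_const (q a)).sub
          (hper i (mem_insert_of_mem hi))) (fun t ht => ?_) t
      rw [hshift, show g t = 0 from h0 t (by omega),
        show g (t + q a) = 0 from h0 (t + q a) (by omega), sub_zero]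
    exact hg.eq_zero_of_forall_lt (hq a (mem_insert_self a s)) (fun t ht => h0 t (by omega)) t

end

/-- If `f₁, …, f_m : ℕ → A` are periodic with periods `q₁, …, q_m` and their sum
vanishes at all `t < q₁ + ⋯ + q_m`, then the sum vanishes everywhere. -/
theorem stmt8 {A : Type*} [AddCommGroup A] (m : ℕ) (f : Fin m → ℕ → A)
    (q : Fin m → ℕ) (hq : ∀ i, 1 ≤ q i)
    (hper : ∀ i t, f i (t + q i) = f i t)
    (h0 : ∀ t < ∑ i, q i, (∑ i, f i t) = 0) :
    ∀ t, (∑ i, f i t) = 0 :=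
  Finset.sum_eq_zero_of_periodic_of_forall_lt_sum Finset.univ f q (fun i _ => hq i)
    (fun i _ => hper i) h0
end

section
/- Let G be a nilpotent group of class c. Then the commutator subgroup [G^{ω,n}, G^{ω,n}] is contained in ([G,G])^{ω, n^{2c}}, where for a group H and m ∈ ℕ, H^{ω,m} denotes the subgroup of H^ω generated by all functions ℕ → H that are periodic with period at most m. -/
/-!
Say that `f : ℕ → G` has weight `j` if it takes values in the `j`-th term `γⱼ` of the lower
central series and has a period `≤ n ^ (j + 1)`. As `⁅γᵢ, γⱼ⁆ ≤ γᵢ₊ⱼ₊₁` and the pointwise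
commutator of functions with periods `d` and `e` has period `d * e`, commutators of generators
of weights `i` and `j` have weight `i + j + 1`. Let `Hₖ` be the group generated by the functions
of weight `≥ k`. Downward induction from `k = c`, where `Hₖ` is trivial, gives
`⁅H₀, Hₖ⁆ ≤ Hₖ₊₁`: the inductive hypothesis makes `Hₖ₊₁` normal in `H₀`, so it suffices to check
generators. Finally `G^{ω,n} ≤ H₀`, and the generators of `H₁` of weight `j < c` take values in
`[G, G]` with period `≤ n ^ c`.
-/
/-- The subgroup of `G^ω = (ℕ → G)` (with pointwise multiplication) generated by
the functions that are periodic with period at most `m`. -/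
def periodicSubgroup (G : Type*) [Group G] (m : ℕ) : Subgroup (ℕ → G) :=
  Subgroup.closure {f : ℕ → G | ∃ d, 1 ≤ d ∧ d ≤ m ∧ ∀ t, f (t + d) = f t}

open Function
open scoped commutatorElement

namespace Subgroup

variable {G : Type*} [Group G]

theorem commutator_commutator_le_of_rotate {H₁ H₂ H₃ N : Subgroup G} [N.Normal]
    (h1 : ⁅⁅H₂, H₃⁆, H₁⁆ ≤ N) (h2 : ⁅⁅H₃, H₁⁆, H₂⁆ ≤ N) : ⁅⁅H₁, H₂⁆, H₃⁆ ≤ N := by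
  have mod_N : ∀ X Y Z : Subgroup G, ⁅⁅X, Y⁆, Z⁆ ≤ N ↔
      ⁅⁅X.map (QuotientGroup.mk' N), Y.map (QuotientGroup.mk' N)⁆,
        Z.map (QuotientGroup.mk' N)⁆ = ⊥ := fun X Y Z => by
    rw [← map_commutator, ← map_commutator, map_eq_bot_iff, QuotientGroup.ker_mk']
  rw [mod_N] at h1 h2 ⊢
  exact commutator_commutator_eq_bot_of_rotate h1 h2

theorem commutator_lowerCentralSeries_le (i j : ℕ) :
    ⁅(⊤ : Subgroup G).lowerCentralSeries i, (⊤ : Subgroup G).lowerCentralSeries j⁆ ≤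
      (⊤ : Subgroup G).lowerCentralSeries (i + j + 1) := by
  induction j generalizing i with
  | zero => exact le_rfl
  | succ j ih =>
    rw [lowerCentralSeries_succ, commutator_comm]
    refine commutator_commutator_le_of_rotate ?_ (commutator_mono (ih i) le_top)
    rw [commutator_comm ⊤, ← lowerCentralSeries_succ]
    rw [show i + (j + 1) + 1 = i + 1 + j + 1 by omega]
    exact ih (i + 1)

theorem commutator_closure_le_of_le_normalizer {X Y : Set G} {K : Subgroup G}
    (hX : closure X ≤ normalizer K) (hY : closure Y ≤ normalizer K)
    (h : ∀ x ∈ X, ∀ y ∈ Y, ⁅x, y⁆ ∈ K) : ⁅closure X, closure Y⁆ ≤ K := by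
  have conj_mem {g k : G} (hg : g ∈ normalizer (K : Set G)) (hk : k ∈ K) : g * k * g⁻¹ ∈ K :=
    (mem_normalizer_iff.mp hg k).mp hk
  have mem_left : ∀ x ∈ closure X, ∀ y ∈ Y, ⁅x, y⁆ ∈ K := by
    intro x hx y hy
    induction hx using closure_induction with
    | mem x hx => exact h x hx y hy
    | one => simp
    | mul a b ha _ iha ihb =>
      rw [show ⁅a * b, y⁆ = a * ⁅b, y⁆ * a⁻¹ * ⁅a, y⁆ by group]
      exact mul_mem (conj_mem (hX ha) ihb) iha
    | inv a ha iha =>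
      rw [show ⁅a⁻¹, y⁆ = a⁻¹ * ⁅a, y⁆⁻¹ * a⁻¹⁻¹ by group]
      exact conj_mem (hX (inv_mem ha)) (inv_mem iha)
  rw [commutator_le]
  intro x hx y hy
  induction hy using closure_induction with
  | mem y hy => exact mem_left x hx y hy
  | one => simp
  | mul a b ha _ iha ihb =>
    rw [show ⁅x, a * b⁆ = ⁅x, a⁆ * (a * ⁅x, b⁆ * a⁻¹) by group]
    exact mul_mem iha (conj_mem (hY ha) ihb)
  | inv a ha iha =>
    rw [show ⁅x, a⁻¹⁆ = a⁻¹ * ⁅x, a⁆⁻¹ * a⁻¹⁻¹ by group]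
    exact conj_mem (hY (inv_mem ha)) (inv_mem iha)

end Subgroup

open Subgroup

def lcsPeriodicSet (G : Type*) [Group G] (n k : ℕ) : Set (ℕ → G) :=
  {f | ∃ j, k ≤ j ∧ (∀ t, f t ∈ (⊤ : Subgroup G).lowerCentralSeries j) ∧
    ∃ d, 0 < d ∧ d ≤ n ^ (j + 1) ∧ Periodic f d}

section

variable {G : Type*} [Group G] {n c : ℕ}

theorem lcsPeriodicSet_antitone : Antitone (lcsPeriodicSet G n) :=
  fun _ _ hkl _ ⟨j, hlj, hf⟩ => ⟨j, hkl.trans hlj, hf⟩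

theorem commutatorElement_mem_lcsPeriodicSet {f g : ℕ → G} {k : ℕ}
    (hf : f ∈ lcsPeriodicSet G n 0) (hg : g ∈ lcsPeriodicSet G n k) :
    ⁅f, g⁆ ∈ lcsPeriodicSet G n (k + 1) := by
  obtain ⟨i, -, hfγ, d, hd, hdn, hfd⟩ := hf
  obtain ⟨j, hkj, hgγ, e, he, hen, hge⟩ := hg
  refine ⟨i + j + 1, by omega,
    fun t => commutator_lowerCentralSeries_le i j (commutator_mem_commutator (hfγ t) (hgγ t)),
    d * e, Nat.mul_pos hd he, ?_, fun t => ?_⟩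
  · calc d * e ≤ n ^ (i + 1) * n ^ (j + 1) := Nat.mul_le_mul hdn hen
      _ = n ^ (i + j + 1 + 1) := by ring
  · have hf' : Periodic f (d * e) := by simpa [mul_comm] using hfd.nat_mul e
    have hg' : Periodic g (d * e) := by simpa using hge.nat_mul d
    show ⁅f (t + d * e), g (t + d * e)⁆ = ⁅f t, g t⁆
    rw [hf' t, hg' t]

theorem closure_lcsPeriodicSet_eq_bot (hc : (⊤ : Subgroup G).lowerCentralSeries c = ⊥) {k : ℕ}
    (hck : c ≤ k) : closure (lcsPeriodicSet G n k) = ⊥ := by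
  rw [eq_bot_iff, closure_le]
  rintro f ⟨j, hkj, hfγ, -⟩
  have hj : (⊤ : Subgroup G).lowerCentralSeries j = ⊥ :=
    eq_bot_mono (Subgroup.lowerCentralSeries_antitone ⊤ (hck.trans hkj)) hc
  exact funext fun t => by simpa [hj] using hfγ t

theorem commutator_closure_lcsPeriodicSet_le (hc : (⊤ : Subgroup G).lowerCentralSeries c = ⊥)
    (k : ℕ) :
    ⁅closure (lcsPeriodicSet G n 0), closure (lcsPeriodicSet G n k)⁆ ≤
      closure (lcsPeriodicSet G n (k + 1)) := by
  obtain hck | hkc := le_or_gt c k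
  · rw [closure_lcsPeriodicSet_eq_bot hc hck, commutator_bot_right]
    exact bot_le
  · have hnorm :
        closure (lcsPeriodicSet G n 0) ≤ normalizer (closure (lcsPeriodicSet G n (k + 1))) :=
      le_normalizer_iff_commutator_le_right.mpr <|
        (commutator_closure_lcsPeriodicSet_le hc (k + 1)).trans
          (Subgroup.closure_mono (lcsPeriodicSet_antitone (k + 1).le_succ))
    exact commutator_closure_le_of_le_normalizer hnorm
      ((Subgroup.closure_mono (lcsPeriodicSet_antitone k.zero_le)).trans hnorm)
      fun f hf g hg => subset_closure (commutatorElement_mem_lcsPeriodicSet hf hg)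
termination_by c - k

theorem periodicSubgroup_le_closure_lcsPeriodicSet :
    periodicSubgroup G n ≤ closure (lcsPeriodicSet G n 0) :=
  Subgroup.closure_mono fun _ ⟨d, hd, hdn, hf⟩ =>
    ⟨0, le_rfl, fun _ => mem_top _, d, hd, by rwa [pow_one], hf⟩

theorem closure_lcsPeriodicSet_one_le (hc : (⊤ : Subgroup G).lowerCentralSeries c = ⊥) :
    closure (lcsPeriodicSet G n 1) ≤
      closure {f : ℕ → G | (∀ t, f t ∈ commutator G) ∧ ∃ d, 0 < d ∧ d ≤ n ^ c ∧ Periodic f d} := by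
  rw [closure_le]
  rintro f ⟨j, hj, hfγ, d, hd, hdn, hfd⟩
  obtain hcj | hjc := le_or_gt c j
  · have hf : f ∈ closure (lcsPeriodicSet G n j) :=
      subset_closure ⟨j, le_rfl, hfγ, d, hd, hdn, hfd⟩
    rw [closure_lcsPeriodicSet_eq_bot hc hcj, mem_bot] at hf
    exact hf ▸ one_mem _
  · have hn : 0 < n := Nat.pos_of_ne_zero fun hn => by simp [hn] at hdn; omega
    exact subset_closure ⟨fun t => Subgroup.lowerCentralSeries_antitone ⊤ hj (hfγ t), d, hd,
      hdn.trans (Nat.pow_le_pow_right hn hjc), hfd⟩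

theorem commutator_periodicSubgroup_le (hc : (⊤ : Subgroup G).lowerCentralSeries c = ⊥) :
    ⁅periodicSubgroup G n, periodicSubgroup G n⁆ ≤
      closure {f : ℕ → G | (∀ t, f t ∈ commutator G) ∧ ∃ d, 0 < d ∧ d ≤ n ^ c ∧ Periodic f d} :=
  calc ⁅periodicSubgroup G n, periodicSubgroup G n⁆
      ≤ ⁅closure (lcsPeriodicSet G n 0), closure (lcsPeriodicSet G n 0)⁆ :=
        commutator_mono periodicSubgroup_le_closure_lcsPeriodicSet
          periodicSubgroup_le_closure_lcsPeriodicSet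
    _ ≤ closure (lcsPeriodicSet G n 1) := commutator_closure_lcsPeriodicSet_le hc 0
    _ ≤ _ := closure_lcsPeriodicSet_one_le hc

end

/-- For a nilpotent group `G` of class `c`, the commutator subgroup
`[G^{ω,n}, G^{ω,n}]` is contained in `([G,G])^{ω,n^{2c}}`, the subgroup of `G^ω`
generated by functions into `[G,G]` that are periodic with period at most `n^{2c}`. -/
theorem stmt9 {G : Type*} [Group G] [Group.IsNilpotent G] (c n : ℕ)
    (hc : Group.nilpotencyClass G = c) :
    ⁅periodicSubgroup G n, periodicSubgroup G n⁆ ≤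
      Subgroup.closure {f : ℕ → G |
        (∀ t, f t ∈ commutator G) ∧
        ∃ d, 1 ≤ d ∧ d ≤ n ^ (2 * c) ∧ ∀ t, f (t + d) = f t} := by
  have hpow : n ^ c ≤ n ^ (2 * c) := by
    rcases n.eq_zero_or_pos with rfl | hn
    · rcases c.eq_zero_or_pos with rfl | hc <;> simp [*]
    · exact Nat.pow_le_pow_right hn (by omega)
  refine (commutator_periodicSubgroup_le (hc ▸ Subgroup.lowerCentralSeries_nilpotencyClass)).trans
    (Subgroup.closure_mono ?_)
  rintro f ⟨hfγ, d, hd, hdn, hfd⟩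
  exact ⟨hfγ, d, hd, hdn.trans hpow, hfd⟩
end

section
/- In any group F generated by a set Γ, the commutator subgroup [F, F] is generated by the set of all left-normed commutators [g₁, g₂, …, g_k] := [[…[[g₁,g₂],g₃],…], g_k] with k ≥ 2 and g₁, …, g_k ∈ Γ ∪ Γ⁻¹. -/
/-!
Let `H` be the subgroup generated by the left-normed commutators. With Mathlib's convention
`⁅x, g⁆ = x * g * x⁻¹ * g⁻¹` we have `g * x * g⁻¹ = ⁅x, g⁆⁻¹ * x`, and appending `g` to a
left-normed commutator `x` gives the left-normed commutator `⁅x, g⁆`; so conjugation by every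
`g ∈ Γ ∪ Γ⁻¹` maps `H` into itself and `H` is normal. In `F ⧸ H` the images of the generators
commute, because their commutators lie in `H`; hence `F ⧸ H` is abelian and `[F, F] ≤ H`.
Conversely every left-normed commutator of length at least two is a commutator.
-/

open scoped commutatorElement

namespace Subgroup

variable {G : Type*} [Group G]

theorem mul_comm_of_closure_eq_top {S : Set G} (hS : closure S = ⊤)
    (hcomm : ∀ x ∈ S, ∀ y ∈ S, x * y = y * x) (x y : G) : x * y = y * x :=
  have hle (z : G) : z ∈ S.centralizer.centralizer :=
    closure_le_centralizer_centralizer S (hS ▸ mem_top z)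
  Set.centralizer_centralizer_comm_of_comm hcomm x (hle x) y (hle y)

theorem commutator_le_of_commutatorElement_mem {N : Subgroup G} [N.Normal] {S : Set G}
    (hS : closure S = ⊤) (h : ∀ a ∈ S, ∀ b ∈ S, ⁅a, b⁆ ∈ N) : _root_.commutator G ≤ N := by
  rw [← Normal.quotient_commutative_iff_commutator_le]
  have hgen : closure (QuotientGroup.mk' N '' S) = ⊤ := by
    rw [← MonoidHom.map_closure, hS, map_top_of_surjective _ (QuotientGroup.mk'_surjective N)]
  refine ⟨⟨mul_comm_of_closure_eq_top hgen ?_⟩⟩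
  rintro _ ⟨a, ha, rfl⟩ _ ⟨b, hb, rfl⟩
  rw [← commutatorElement_eq_one_iff_mul_comm, ← map_commutatorElement, QuotientGroup.mk'_apply,
    QuotientGroup.eq_one_iff]
  exact h a ha b hb

theorem conj_mem_closure_of_commutatorElement_mem {X : Set G} {g : G}
    (h : ∀ x ∈ X, ⁅x, g⁆ ∈ closure X) {y : G} (hy : y ∈ closure X) : g * y * g⁻¹ ∈ closure X := by
  have hmap : (closure X).map (MulAut.conj g).toMonoidHom ≤ closure X := by
    rw [MonoidHom.map_closure, closure_le]
    rintro _ ⟨x, hx, rfl⟩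
    have hconj : g * x * g⁻¹ = ⁅x, g⁆⁻¹ * x := by group
    simpa [hconj] using mul_mem (inv_mem (h x hx)) (subset_closure hx)
  exact hmap ⟨y, hy, rfl⟩

theorem normal_of_conj_mem {H : Subgroup G} {S : Set G} (hS : closure S = ⊤)
    (hconj : ∀ g ∈ S ∪ S⁻¹, ∀ x ∈ H, g * x * g⁻¹ ∈ H) : H.Normal := by
  rw [← normalizer_eq_top_iff, eq_top_iff, ← hS, closure_le]
  refine fun g hg => mem_normalizer_iff.2 fun x => ⟨hconj g (.inl hg) x, fun hx => ?_⟩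
  simpa [mul_assoc] using hconj g⁻¹ (.inr (by simpa using hg)) _ hx

end Subgroup

section LeftNormed

variable {G : Type*} [Group G]

def leftNormedCommutators (T : Set G) : Set G :=
  {x | ∃ g₀ : G, ∃ l : List G,
    g₀ ∈ T ∧ l ≠ [] ∧ (∀ g ∈ l, g ∈ T) ∧ x = l.foldl (fun p r => ⁅p, r⁆) g₀}

variable {T : Set G} {x g : G}

theorem commutatorElement_mem_leftNormedCommutators_of_mem (hx : x ∈ T) (hg : g ∈ T) :
    ⁅x, g⁆ ∈ leftNormedCommutators T :=
  ⟨x, [g], hx, List.cons_ne_nil _ _, by simpa using hg, rfl⟩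

theorem commutatorElement_mem_leftNormedCommutators (hx : x ∈ leftNormedCommutators T)
    (hg : g ∈ T) : ⁅x, g⁆ ∈ leftNormedCommutators T := by
  obtain ⟨g₀, l, hg₀, -, hl, rfl⟩ := hx
  refine ⟨g₀, l ++ [g], hg₀, by simp, ?_, by simp⟩
  simpa [or_imp, forall_and] using ⟨hl, hg⟩

theorem leftNormedCommutators_subset_commutator (T : Set G) :
    leftNormedCommutators T ⊆ commutator G := by
  rintro _ ⟨g₀, l, -, hl, -, rfl⟩
  obtain ⟨L, b, rfl⟩ := (List.eq_nil_or_concat l).resolve_left hl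
  rw [List.concat_eq_append, List.foldl_append, List.foldl_cons, List.foldl_nil,
    commutator_eq_closure]
  exact Subgroup.subset_closure (commutator_mem_commutatorSet _ _)

end LeftNormed

/-- In a group `F` generated by `Γ`, the commutator subgroup `[F,F]` is generated
by the left-normed commutators `[g₁, …, g_k]` with `k ≥ 2` and
`g₁, …, g_k ∈ Γ ∪ Γ⁻¹`. -/
theorem stmt10 {F : Type*} [Group F] (Γ : Set F)
    (hgen : Subgroup.closure Γ = ⊤) :
    commutator F = Subgroup.closure
      {x : F | ∃ g₀ : F, ∃ l : List F,
        g₀ ∈ Γ ∪ Γ⁻¹ ∧ l ≠ [] ∧ (∀ g ∈ l, g ∈ Γ ∪ Γ⁻¹) ∧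
        x = l.foldl (fun p r => ⁅p, r⁆) g₀} := by
  change commutator F = Subgroup.closure (leftNormedCommutators (Γ ∪ Γ⁻¹))
  have : (Subgroup.closure (leftNormedCommutators (Γ ∪ Γ⁻¹))).Normal :=
    Subgroup.normal_of_conj_mem hgen fun g hg _ =>
      Subgroup.conj_mem_closure_of_commutatorElement_mem fun _ hx =>
        Subgroup.subset_closure (commutatorElement_mem_leftNormedCommutators hx hg)
  refine le_antisymm ?_ ((Subgroup.closure_le _).2 (leftNormedCommutators_subset_commutator _))
  exact Subgroup.commutator_le_of_commutatorElement_mem hgen fun a ha b hb =>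
    Subgroup.subset_closure (commutatorElement_mem_leftNormedCommutators_of_mem (.inl ha) (.inl hb))
end

section
/- Let H be a torsion-free group. Two rays (finite sequences of the form (a b^i)_{0 ≤ i ≤ k} with b ≠ 1) over H whose periods b are not commensurable have supports intersecting in at most one element. -/
/-! Two common points `a b^i₁ = g h^j₁` and `a b^i₂ = g h^j₂` of the rays give
`b^(i₂ - i₁) = h^(j₂ - j₁)`. If `i₁ ≠ i₂`, then `j₁ ≠ j₂` as well, since `b` has infinite order,
and this equation makes the periods commensurable. -/

theorem inv_mul_pow_mul_mul_pow {G : Type*} [Group G] (a b : G) (i j : ℕ) :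
    (a * b ^ i)⁻¹ * (a * b ^ j) = b ^ ((j : ℤ) - i) := by
  rw [zpow_sub, zpow_natCast, zpow_natCast, mul_inv_rev, mul_assoc, inv_mul_cancel_left,
    (Commute.pow_pow_self b i j).inv_left.eq]

theorem eq_of_mul_pow_eq_mul_pow_of_not_commensurable {G : Type*} [Group G] {a b g h : G}
    (hb : ∀ n : ℤ, n ≠ 0 → b ^ n ≠ 1)
    (hnc : ¬ ∃ x y : ℤ, x ≠ 0 ∧ y ≠ 0 ∧ b ^ x = h ^ y) {i₁ i₂ j₁ j₂ : ℕ}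
    (h₁ : a * b ^ i₁ = g * h ^ j₁) (h₂ : a * b ^ i₂ = g * h ^ j₂) : i₁ = i₂ := by
  have hpow : b ^ ((i₂ : ℤ) - i₁) = h ^ ((j₂ : ℤ) - j₁) := by
    rw [← inv_mul_pow_mul_mul_pow a, ← inv_mul_pow_mul_mul_pow g, h₁, h₂]
  by_contra hi
  have hx : (i₂ : ℤ) - i₁ ≠ 0 := by omega
  have hy : (j₂ : ℤ) - j₁ ≠ 0 := by
    intro hj
    rw [hj, zpow_zero] at hpow
    exact hb _ hx hpow
  exact hnc ⟨_, _, hx, hy, hpow⟩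

theorem stmt13_general {H : Type*} [Group H]
    (htf : ∀ x : H, x ≠ 1 → ∀ n : ℤ, n ≠ 0 → x ^ n ≠ 1)
    (a b g h : H) (hb : b ≠ 1) (k l : ℕ)
    (hnc : ¬ ∃ x y : ℤ, x ≠ 0 ∧ y ≠ 0 ∧ b ^ x = h ^ y) :
    Set.Subsingleton
      ({z : H | ∃ i : ℕ, i ≤ k ∧ z = a * b ^ i} ∩
       {z : H | ∃ j : ℕ, j ≤ l ∧ z = g * h ^ j}) := by
  rintro _ ⟨⟨i₁, -, rfl⟩, ⟨j₁, -, h₁⟩⟩ _ ⟨⟨i₂, -, rfl⟩, ⟨j₂, -, h₂⟩⟩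
  rw [eq_of_mul_pow_eq_mul_pow_of_not_commensurable (htf b hb) hnc h₁ h₂]

/-- In a torsion-free group, two rays whose periods are not commensurable have
supports intersecting in at most one element. -/
theorem stmt13 {H : Type*} [Group H]
    (htf : ∀ x : H, x ≠ 1 → ∀ n : ℤ, n ≠ 0 → x ^ n ≠ 1)
    (a b g h : H) (hb : b ≠ 1) (hh : h ≠ 1) (k l : ℕ)
    (hnc : ¬ ∃ x y : ℤ, x ≠ 0 ∧ y ≠ 0 ∧ b ^ x = h ^ y) :
    Set.Subsingleton
      ({z : H | ∃ i : ℕ, i ≤ k ∧ z = a * b ^ i} ∩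
       {z : H | ∃ j : ℕ, j ≤ l ∧ z = g * h ^ j}) :=
  stmt13_general htf a b g h hb k l hnc
end

section
/- Let H be a torsion-free group and let p = (a b^i)_{0 ≤ i ≤ m} and q = (g h^j)_{0 ≤ j ≤ ℓ} be rays with b = h^d for some nonzero integer d. Then the set {i ∈ ℤ : a b^i ∈ supp(q)} is an interval of ℤ (i.e., if i₁ ≤ i ≤ i₂ and a b^{i₁}, a b^{i₂} ∈ supp(q) then a b^i ∈ supp(q)). -/
/-!
Since `b = h ^ d`, the ray `p` runs inside the coset `a ⟨h⟩`. Once it meets `q`, say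
`a = g * h ^ c`, we get `a * b ^ i = g * h ^ (c + d * i)`, and torsion-freeness makes
`n ↦ h ^ n` injective, so `a * b ^ i ∈ supp q` exactly when `0 ≤ c + d * i ≤ l`.
An affine function of `i` takes values between its values at the endpoints.
-/

def raySupport {H : Type*} [Group H] (g h : H) (l : ℕ) : Set H :=
  {z | ∃ j : ℕ, j ≤ l ∧ z = g * h ^ j}

theorem mul_zpow_mem_raySupport_iff {H : Type*} [Group H] {g h : H}
    (hinj : Function.Injective fun n : ℤ => h ^ n) (l : ℕ) (c : ℤ) :
    g * h ^ c ∈ raySupport g h l ↔ 0 ≤ c ∧ c ≤ l := by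
  constructor
  · rintro ⟨j, hjl, he⟩
    have hcj : c = j := hinj (by simpa using he)
    omega
  · rintro ⟨hc₀, hcl⟩
    refine ⟨c.toNat, by omega, ?_⟩
    rw [← zpow_natCast, Int.toNat_of_nonneg hc₀]

theorem add_mul_mem_Icc_of_le_of_le {R : Type*} [CommRing R] [LinearOrder R] [IsStrictOrderedRing R]
    {c d lo hi i₁ i i₂ : R} (hi₁ : i₁ ≤ i) (hi₂ : i ≤ i₂)
    (h₁ : c + d * i₁ ∈ Set.Icc lo hi) (h₂ : c + d * i₂ ∈ Set.Icc lo hi) :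
    c + d * i ∈ Set.Icc lo hi := by
  obtain ⟨h₁lo, h₁hi⟩ := h₁
  obtain ⟨h₂lo, h₂hi⟩ := h₂
  rcases le_total 0 d with hd | hd
  · have := mul_le_mul_of_nonneg_left hi₁ hd
    have := mul_le_mul_of_nonneg_left hi₂ hd
    constructor <;> linarith
  · have := mul_le_mul_of_nonpos_left hi₁ hd
    have := mul_le_mul_of_nonpos_left hi₂ hd
    constructor <;> linarith

theorem stmt14_general {H : Type*} [Group H]
    (htf : ∀ x : H, x ≠ 1 → ∀ n : ℤ, n ≠ 0 → x ^ n ≠ 1)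
    (a b g h : H) (hh : h ≠ 1) (d : ℤ) (hbh : b = h ^ d)
    (l : ℕ) :
    ∀ i₁ i i₂ : ℤ, i₁ ≤ i → i ≤ i₂ →
      a * b ^ i₁ ∈ {z : H | ∃ j : ℕ, j ≤ l ∧ z = g * h ^ j} →
      a * b ^ i₂ ∈ {z : H | ∃ j : ℕ, j ≤ l ∧ z = g * h ^ j} →
      a * b ^ i ∈ {z : H | ∃ j : ℕ, j ≤ l ∧ z = g * h ^ j} := by
  intro i₁ i i₂ hi₁ hi₂ hmem₁ hmem₂
  have hinj : Function.Injective fun n : ℤ => h ^ n :=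
    injective_zpow_iff_not_isOfFinOrder.mpr fun hfin => by
      obtain ⟨n, hn, hpow⟩ := isOfFinOrder_iff_zpow_eq_one.mp hfin
      exact htf h hh n hn hpow
  obtain ⟨j₁, hj₁, he₁⟩ := hmem₁
  have ha : a = g * h ^ (j₁ - d * i₁) := by
    rw [zpow_sub, zpow_natCast, ← mul_assoc, ← he₁, hbh, ← zpow_mul]; group
  have hray (k : ℤ) : a * b ^ k = g * h ^ ((j₁ - d * i₁) + d * k) := by
    rw [ha, hbh, ← zpow_mul, mul_assoc, ← zpow_add]
  change a * b ^ i₂ ∈ raySupport g h l at hmem₂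
  change a * b ^ i ∈ raySupport g h l
  rw [hray, mul_zpow_mem_raySupport_iff hinj] at hmem₂ ⊢
  refine add_mul_mem_Icc_of_le_of_le hi₁ hi₂ ?_ hmem₂
  simpa using hj₁

/-- Let `p = (a b^i)_{0 ≤ i ≤ m}` and `q = (g h^j)_{0 ≤ j ≤ ℓ}` be rays over a
torsion-free group with `b = h^d` for some nonzero `d`. Then
`{i ∈ ℤ : a b^i ∈ supp(q)}` is an interval of `ℤ`. -/
theorem stmt14 {H : Type*} [Group H]
    (htf : ∀ x : H, x ≠ 1 → ∀ n : ℤ, n ≠ 0 → x ^ n ≠ 1)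
    (a b g h : H) (hh : h ≠ 1) (d : ℤ) (hd : d ≠ 0) (hbh : b = h ^ d)
    (m l : ℕ) :
    ∀ i₁ i i₂ : ℤ, i₁ ≤ i → i ≤ i₂ →
      a * b ^ i₁ ∈ {z : H | ∃ j : ℕ, j ≤ l ∧ z = g * h ^ j} →
      a * b ^ i₂ ∈ {z : H | ∃ j : ℕ, j ≤ l ∧ z = g * h ^ j} →
      a * b ^ i ∈ {z : H | ∃ j : ℕ, j ≤ l ∧ z = g * h ^ j} :=
  stmt14_general htf a b g h hh d hbh l
end

section
/- Let H be a torsion-free group, p = (a b^i)_{0 ≤ i ≤ m} and q = (g h^j)_{0 ≤ j ≤ ℓ} rays with b = h^d, d ∈ ℤ \ {0}. Then p is packed into q (i.e., supp(p) = supp(q) ∩ a⟨b⟩) if and only if a ∈ supp(q), a b^m ∈ supp(q), a b^{−1} ∈ {g h^j : j ∈ ℤ \ [0, ℓ]}, and a b^{m+1} ∈ {g h^j : j ∈ ℤ \ [0, ℓ]}. -/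
/-!
Since `h` has infinite order, `n ↦ g h^n` identifies the coset `g⟨h⟩` with `ℤ`, and once
`a = g h^{j₀}` the ray `p` becomes the affine map `i ↦ j₀ + d i`. Being packed then says that the
preimage of `[0, ℓ]` under this map, an interval of `ℤ` containing `0` because the map is monotone
or antitone, is exactly `[0, m]`; an interval containing `0` is `[0, m]` iff it contains `m` but
neither `-1` nor `m + 1`.
-/

open Set Function

theorem Int.eq_Icc_iff_of_ordConnected {S : Set ℤ} (hS : S.OrdConnected) {a b : ℤ} (ha : a ∈ S) :
    S = Icc a b ↔ b ∈ S ∧ a - 1 ∉ S ∧ b + 1 ∉ S := by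
  constructor
  · rintro rfl
    simp only [mem_Icc] at ha ⊢
    omega
  · rintro ⟨hb, ha₁, hb₁⟩
    refine Subset.antisymm (fun i hi => ⟨?_, ?_⟩) (hS.out ha hb)
    · by_contra! hlt
      exact ha₁ (hS.out hi ha ⟨by omega, by omega⟩)
    · by_contra! hlt
      exact hb₁ (hS.out hb hi ⟨by omega, by omega⟩)

theorem Int.ordConnected_preimage_affine {s : Set ℤ} (hs : s.OrdConnected) (c d : ℤ) :
    ((fun i => c + d * i) ⁻¹' s).OrdConnected := by
  rcases le_total 0 d with hd | hd
  · exact hs.preimage_mono ((monotone_mul_left_of_nonneg hd).const_add c)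
  · exact hs.preimage_anti ((antitone_mul_left hd).const_add c)

theorem Set.image_eq_inter_range_iff {α β : Type*} {f : α → β} (hf : Injective f) {s : Set α}
    {t : Set β} : f '' s = t ∩ range f ↔ s = f ⁻¹' t := by
  rw [← image_preimage_eq_inter_range, hf.image_injective.eq_iff]

section RaySupport

variable {G : Type*} [Group G]

theorem injective_mul_zpow (g : G) {h : G} (hh : ¬IsOfFinOrder h) :
    Injective fun n : ℤ => g * h ^ n :=
  (mul_right_injective g).comp (injective_zpow_iff_not_isOfFinOrder.2 hh)

theorem exists_nat_le_eq_mul_pow_iff {x y z : G} {n : ℕ} :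
    (∃ i : ℕ, i ≤ n ∧ z = x * y ^ i) ↔ z ∈ (x * y ^ ·) '' Icc (0 : ℤ) n := by
  constructor
  · rintro ⟨i, hi, rfl⟩
    exact ⟨i, ⟨by omega, by omega⟩, by simp⟩
  · rintro ⟨i, ⟨hi₀, hin⟩, rfl⟩
    lift i to ℕ using hi₀
    exact ⟨i, by omega, by simp⟩

theorem exists_int_lt_zero_or_lt_eq_mul_zpow_iff {x y z : G} {n : ℕ} :
    (∃ j : ℤ, (j < 0 ∨ (n : ℤ) < j) ∧ z = x * y ^ j) ↔ z ∈ (x * y ^ ·) '' (Icc (0 : ℤ) n)ᶜ := by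
  simp only [mem_image, mem_compl_iff, mem_Icc, not_and_or, not_le, eq_comm]

theorem setOf_exists_nat_le_eq_image (x y : G) (n : ℕ) :
    {z : G | ∃ i : ℕ, i ≤ n ∧ z = x * y ^ i} = (x * y ^ ·) '' Icc (0 : ℤ) n :=
  Set.ext fun _ => exists_nat_le_eq_mul_pow_iff

theorem setOf_exists_int_eq_range (x y : G) :
    {z : G | ∃ i : ℤ, z = x * y ^ i} = range (fun i : ℤ => x * y ^ i) :=
  Set.ext fun _ => exists_congr fun _ => eq_comm

theorem mul_zpow_image_Icc_eq_inter_range_iff {a b g h : G} (hh : ¬IsOfFinOrder h) {d : ℤ}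
    (hd : d ≠ 0) (hb : b = h ^ d) {j₀ l : ℤ} (hj₀ : j₀ ∈ Icc 0 l) (ha : a = g * h ^ j₀) (m : ℤ) :
    (a * b ^ ·) '' Icc 0 m = (g * h ^ ·) '' Icc 0 l ∩ range (fun i : ℤ => a * b ^ i) ↔
      a * b ^ m ∈ (g * h ^ ·) '' Icc 0 l ∧ a * b ^ (-1 : ℤ) ∈ (g * h ^ ·) '' (Icc 0 l)ᶜ ∧
        a * b ^ (m + 1) ∈ (g * h ^ ·) '' (Icc 0 l)ᶜ := by
  set φ : ℤ → G := (g * h ^ ·)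
  set f : ℤ → ℤ := fun i => j₀ + d * i
  have hφ : Injective φ := injective_mul_zpow g hh
  have hf : Injective f := fun i j hij => mul_left_cancel₀ hd (add_left_cancel hij)
  have hab : (a * b ^ ·) = φ ∘ f := by
    funext i
    simp only [φ, f, comp_apply, ha, hb, mul_assoc, zpow_add, zpow_mul]
  rw [hab, image_eq_inter_range_iff (hφ.comp hf), preimage_comp, hφ.preimage_image, eq_comm,
    Int.eq_Icc_iff_of_ordConnected (Int.ordConnected_preimage_affine ordConnected_Icc j₀ d)
      (by simpa [f] using hj₀)]
  simp only [congrFun hab, comp_apply, hφ.mem_set_image, mem_compl_iff, mem_preimage, zero_sub, f]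

end RaySupport

/-- Characterization of packing: a ray `p = (a b^i)_{0 ≤ i ≤ m}` with `b = h^d`
(`d ≠ 0`) is packed into the ray `q = (g h^j)_{0 ≤ j ≤ ℓ}`
(i.e. `supp(p) = supp(q) ∩ a⟨b⟩`) if and only if `a, a b^m ∈ supp(q)` and
`a b^{-1}, a b^{m+1} ∈ {g h^j : j ∈ ℤ \ [0,ℓ]}`. -/
theorem stmt15 {H : Type*} [Group H]
    (htf : ∀ x : H, x ≠ 1 → ∀ n : ℤ, n ≠ 0 → x ^ n ≠ 1)
    (a b g h : H) (hh : h ≠ 1) (d : ℤ) (hd : d ≠ 0) (hbh : b = h ^ d)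
    (m l : ℕ) :
    ({z : H | ∃ i : ℕ, i ≤ m ∧ z = a * b ^ i} =
      {z : H | ∃ j : ℕ, j ≤ l ∧ z = g * h ^ j} ∩
      {z : H | ∃ i : ℤ, z = a * b ^ i}) ↔
    ((∃ j : ℕ, j ≤ l ∧ a = g * h ^ j) ∧
     (∃ j : ℕ, j ≤ l ∧ a * b ^ m = g * h ^ j) ∧
     (∃ j : ℤ, (j < 0 ∨ (l : ℤ) < j) ∧ a * b ^ (-1 : ℤ) = g * h ^ j) ∧
     (∃ j : ℤ, (j < 0 ∨ (l : ℤ) < j) ∧ a * b ^ ((m : ℤ) + 1) = g * h ^ j)) := by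
  have hh_inf : ¬IsOfFinOrder h := by
    rw [isOfFinOrder_iff_zpow_eq_one]
    rintro ⟨n, hn, hpow⟩
    exact htf h hh n hn hpow
  rw [setOf_exists_nat_le_eq_image, setOf_exists_nat_le_eq_image, setOf_exists_int_eq_range,
    exists_nat_le_eq_mul_pow_iff, exists_nat_le_eq_mul_pow_iff,
    exists_int_lt_zero_or_lt_eq_mul_zpow_iff, exists_int_lt_zero_or_lt_eq_mul_zpow_iff,
    ← zpow_natCast b m]
  constructor
  · intro hpacked
    have ha : a ∈ (fun i : ℤ => a * b ^ i) '' Icc 0 m := ⟨0, by simp, by simp⟩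
    obtain ⟨j₀, hj₀, rfl⟩ := (hpacked.le ha).1
    exact ⟨⟨j₀, hj₀, rfl⟩,
      (mul_zpow_image_Icc_eq_inter_range_iff hh_inf hd hbh hj₀ rfl m).1 hpacked⟩
  · rintro ⟨⟨j₀, hj₀, rfl⟩, hends⟩
    exact (mul_zpow_image_Icc_eq_inter_range_iff hh_inf hd hbh hj₀ rfl m).2 hends
end

section
/- Let H be a torsion-free group and let p = (a b^i)_{0 ≤ i ≤ m} be a ray packed into the ray q = (g h^j)_{0 ≤ j ≤ ℓ}, where b = h^d with d ≠ 0. Then there exists a unique remainder 0 ≤ t < |d| such that supp(p) = {g h^j : 0 ≤ j ≤ ℓ, j ≡ t (mod d)}. -/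
/-!
Torsion-freeness makes `n ↦ h ^ n` injective. Since `a ∈ supp p ⊆ supp q`, we have
`a = g h^j₀` for some `j₀ ≤ ℓ`, so `a b^i = g h^(j₀ + d i)` and `supp q ∩ a⟨b⟩` consists of the
`g h^j` with `j ≡ j₀ (mod d)`. Hence `t = j₀ mod d` works, and any admissible `t` is congruent
to `j₀`, because `a` itself must be one of the `g h^j` with `j ≡ t`.
-/

theorem Int.existsUnique_modEq_nonneg_lt_abs {d : ℤ} (hd : d ≠ 0) (n : ℤ) :
    ∃! t : ℤ, 0 ≤ t ∧ t < |d| ∧ n ≡ t [ZMOD d] := by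
  refine ⟨n % d, ⟨Int.emod_nonneg n hd, Int.emod_lt_abs n hd, (Int.mod_modEq n d).symm⟩, ?_⟩
  rintro t ⟨ht0, htd, hnt⟩
  calc t = t % |d| := (Int.emod_eq_of_lt ht0 htd).symm
    _ = n % d := by rw [Int.emod_abs, hnt]

section TorsionFree

variable {H : Type*} [Group H] {h : H}

theorem injective_zpow_of_zpow_ne_one (hh : ∀ n : ℤ, n ≠ 0 → h ^ n ≠ 1) :
    Function.Injective (fun n : ℤ => h ^ n) :=
  injective_zpow_iff_not_isOfFinOrder.mpr fun hfin =>
    let ⟨n, hn, hhn⟩ := isOfFinOrder_iff_zpow_eq_one.mp hfin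
    hh n hn hhn

theorem exists_mul_zpow_eq_mul_zpow_mul_zpow_iff (hinj : Function.Injective (fun n : ℤ => h ^ n))
    (g : H) (j j₀ d : ℤ) :
    (∃ i : ℤ, g * h ^ j = g * h ^ j₀ * (h ^ d) ^ i) ↔ j₀ ≡ j [ZMOD d] := by
  simp only [Int.modEq_iff_dvd, mul_assoc, mul_right_inj, ← zpow_mul, ← zpow_add,
    hinj.eq_iff, dvd_def]
  exact exists_congr fun i => by constructor <;> intro <;> linarith

theorem ray_inter_coset_eq (hinj : Function.Injective (fun n : ℤ => h ^ n))
    (g : H) (l : ℕ) (j₀ d : ℤ) :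
    {z : H | ∃ j : ℕ, j ≤ l ∧ z = g * h ^ j} ∩ {z : H | ∃ i : ℤ, z = g * h ^ j₀ * (h ^ d) ^ i} =
      {z : H | ∃ j : ℕ, j ≤ l ∧ (j : ℤ) ≡ j₀ [ZMOD d] ∧ z = g * h ^ j} := by
  ext z
  constructor
  · rintro ⟨⟨j, hjl, rfl⟩, hcoset⟩
    rw [Set.mem_ofPred_eq, ← zpow_natCast, exists_mul_zpow_eq_mul_zpow_mul_zpow_iff hinj] at hcoset
    exact ⟨j, hjl, hcoset.symm, rfl⟩
  · rintro ⟨j, hjl, hj, rfl⟩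
    refine ⟨⟨j, hjl, rfl⟩, ?_⟩
    rw [Set.mem_ofPred_eq, ← zpow_natCast, exists_mul_zpow_eq_mul_zpow_mul_zpow_iff hinj]
    exact hj.symm

theorem residue_ray_eq_iff (hinj : Function.Injective (fun n : ℤ => h ^ n))
    (g : H) {l j₀ : ℕ} (hj₀ : j₀ ≤ l) (d t : ℤ) :
    {z : H | ∃ j : ℕ, j ≤ l ∧ (j : ℤ) ≡ j₀ [ZMOD d] ∧ z = g * h ^ j} =
      {z : H | ∃ j : ℕ, j ≤ l ∧ (j : ℤ) ≡ t [ZMOD d] ∧ z = g * h ^ j} ↔ (j₀ : ℤ) ≡ t [ZMOD d] := by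
  constructor
  · intro hset
    have hmem : g * h ^ j₀ ∈ {z : H | ∃ j : ℕ, j ≤ l ∧ (j : ℤ) ≡ t [ZMOD d] ∧ z = g * h ^ j} :=
      hset ▸ ⟨j₀, hj₀, rfl, rfl⟩
    obtain ⟨j, -, hjt, hj⟩ := hmem
    rw [mul_right_inj, ← zpow_natCast, ← zpow_natCast, hinj.eq_iff] at hj
    rwa [hj]
  · intro hj₀t
    ext z
    exact exists_congr fun j => and_congr_right fun _ =>
      and_congr_left fun _ => ⟨fun hj => hj.trans hj₀t, fun hj => hj.trans hj₀t.symm⟩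

end TorsionFree

/-- If the ray `p = (a b^i)_{0 ≤ i ≤ m}` with `b = h^d` (`d ≠ 0`) is packed into
the ray `q = (g h^j)_{0 ≤ j ≤ ℓ}`, then there is a unique remainder
`0 ≤ t < |d|` with `supp(p) = {g h^j : 0 ≤ j ≤ ℓ, j ≡ t (mod d)}`. -/
theorem stmt16 {H : Type*} [Group H]
    (htf : ∀ x : H, x ≠ 1 → ∀ n : ℤ, n ≠ 0 → x ^ n ≠ 1)
    (a b g h : H) (hh : h ≠ 1) (d : ℤ) (hd : d ≠ 0) (hbh : b = h ^ d)
    (m l : ℕ)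
    (hpacked : {z : H | ∃ i : ℕ, i ≤ m ∧ z = a * b ^ i} =
      {z : H | ∃ j : ℕ, j ≤ l ∧ z = g * h ^ j} ∩
      {z : H | ∃ i : ℤ, z = a * b ^ i}) :
    ∃! t : ℤ, 0 ≤ t ∧ t < |d| ∧
      {z : H | ∃ i : ℕ, i ≤ m ∧ z = a * b ^ i} =
        {z : H | ∃ j : ℕ, j ≤ l ∧ (j : ℤ) ≡ t [ZMOD d] ∧ z = g * h ^ j} := by
  have hinj := injective_zpow_of_zpow_ne_one (htf h hh)
  have ha : a ∈ {z : H | ∃ i : ℕ, i ≤ m ∧ z = a * b ^ i} := ⟨0, m.zero_le, by simp⟩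
  obtain ⟨j₀, hj₀, rfl⟩ := (hpacked ▸ ha).1
  subst hbh
  rw [hpacked, ← zpow_natCast h j₀, ray_inter_coset_eq hinj]
  simpa only [residue_ray_eq_iff hinj g hj₀] using Int.existsUnique_modEq_nonneg_lt_abs hd j₀
end

section
/- Let (A, ≤) be a linear order, Ω a finite set, and β : A → 2^Ω a map such that for every ω ∈ Ω the set {a ∈ A : ω ∈ β(a)} is an interval of A. Then A can be partitioned into at most 2|Ω| + 1 intervals A₁, …, A_k such that β is constant on each A_i. -/
/-!
Since each `{a : ω ∈ β a}` is an interval, `ω ∈ β a` iff `ω` has entered some `β b` with `b ≤ a`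
and has not yet left it again. The sets of entered and of exited `ω` grow with `a`, so the sum of
their sizes is a monotone map `A → {0, …, 2|Ω|}`, and where it is constant both sets, hence `β`,
are constant. Its level sets are the required intervals.
-/

open Set

namespace IntervalPartition

variable {A Ω : Type*}

section Preorder

variable [Preorder A] (β : A → Set Ω)

def enteredBy (a : A) : Set Ω := {ω | ∃ b ≤ a, ω ∈ β b}

def exitedBy (a : A) : Set Ω := {ω | ∃ b ≤ a, ω ∉ β b ∧ ∃ c ≤ b, ω ∈ β c}

theorem enteredBy_mono : Monotone (enteredBy β) :=
  fun _ _ hab _ ⟨b, hb, hω⟩ => ⟨b, hb.trans hab, hω⟩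

theorem exitedBy_mono : Monotone (exitedBy β) :=
  fun _ _ hab _ ⟨b, hb, hω⟩ => ⟨b, hb.trans hab, hω⟩

variable {β} in
theorem eq_enteredBy_diff_exitedBy (hβ : ∀ ω, {a | ω ∈ β a}.OrdConnected) (a : A) :
    β a = enteredBy β a \ exitedBy β a := by
  ext ω
  constructor
  · intro hωa
    refine ⟨⟨a, le_rfl, hωa⟩, ?_⟩
    rintro ⟨b, hba, hωb, c, hcb, hωc⟩
    exact hωb ((hβ ω).out hωc hωa ⟨hcb, hba⟩)
  · rintro ⟨⟨c, hca, hωc⟩, hnE⟩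
    by_contra hωa
    exact hnE ⟨a, le_rfl, hωa, c, hca, hωc⟩

variable [Finite Ω]

noncomputable def potential (a : A) : ℕ := (enteredBy β a).ncard + (exitedBy β a).ncard

theorem potential_mono : Monotone (potential β) :=
  fun _ _ hab => add_le_add (ncard_mono (enteredBy_mono β hab)) (ncard_mono (exitedBy_mono β hab))

theorem potential_le (a : A) : potential β a ≤ 2 * Nat.card Ω := by
  have hS := ncard_le_card (enteredBy β a)
  have hE := ncard_le_card (exitedBy β a)
  unfold potential
  omega

variable {β} in
theorem eq_of_le_of_potential_eq (hβ : ∀ ω, {a | ω ∈ β a}.OrdConnected) {a b : A} (hab : a ≤ b)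
    (h : potential β a = potential β b) : β a = β b := by
  have hS := ncard_mono (enteredBy_mono β hab)
  have hE := ncard_mono (exitedBy_mono β hab)
  unfold potential at h
  rw [eq_enteredBy_diff_exitedBy hβ a, eq_enteredBy_diff_exitedBy hβ b,
    eq_of_subset_of_ncard_le (enteredBy_mono β hab) (by omega),
    eq_of_subset_of_ncard_le (exitedBy_mono β hab) (by omega)]

end Preorder

theorem eq_of_potential_eq [LinearOrder A] [Finite Ω] {β : A → Set Ω}
    (hβ : ∀ ω, {a | ω ∈ β a}.OrdConnected) {a b : A} (h : potential β a = potential β b) :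
    β a = β b := by
  rcases le_total a b with hab | hba
  · exact eq_of_le_of_potential_eq hβ hab h
  · exact (eq_of_le_of_potential_eq hβ hba h.symm).symm

end IntervalPartition

open IntervalPartition

/-- If `β : A → 2^Ω` is such that each set `{a : ω ∈ β(a)}` is an interval of the
linear order `A`, then `A` can be partitioned into at most `2|Ω| + 1` intervals
on each of which `β` is constant. -/
theorem stmt17 {A Ω : Type*} [LinearOrder A] [Fintype Ω] (β : A → Set Ω)
    (hβ : ∀ ω : Ω, ({a : A | ω ∈ β a}).OrdConnected) :
    ∃ k : ℕ, k ≤ 2 * Fintype.card Ω + 1 ∧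
      ∃ P : Fin k → Set A,
        (∀ i, (P i).OrdConnected) ∧
        (⋃ i, P i) = Set.univ ∧
        (Pairwise fun i j => Disjoint (P i) (P j)) ∧
        ∀ i, ∀ a ∈ P i, ∀ b ∈ P i, β a = β b := by
  refine ⟨2 * Fintype.card Ω + 1, le_rfl, fun i => potential β ⁻¹' {(i : ℕ)},
    fun i => ordConnected_singleton.preimage_mono (potential_mono β), ?_, ?_,
    fun i a ha b hb => eq_of_potential_eq hβ (ha.trans hb.symm)⟩
  · refine eq_univ_of_forall fun a => mem_iUnion.2 ⟨⟨potential β a, ?_⟩, rfl⟩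
    have := potential_le β a
    rw [Nat.card_eq_fintype_card] at this
    omega
  · exact fun i j hij => disjoint_left.2 fun a hai haj => hij (Fin.ext (hai.symm.trans haj))
end

section
/- Let G be a finitely generated group with finite generating set Γ and let d ≥ 1. Then the map h : G^d ≀ ℤ → G ≀ ℤ defined on generators by h(t) = t^d (t being the generator of ℤ) and h(a) = t^i a t^{−i} for a a generator of the i-th copy of G (0 ≤ i ≤ d−1) extends to an injective group homomorphism, i.e., G^d ≀ ℤ embeds into G ≀ ℤ. -/
/-- Multiplication in the wreath product `G ≀ ℤ`: elements are pairs `(f, n)`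
with `f : ℤ → G` of finite support and `n ∈ ℤ`, and
`(f₁,n₁)(f₂,n₂) = (a ↦ f₁(a) f₂(a - n₁), n₁ + n₂)`. -/
def wmulZ {G : Type*} [Group G] (x y : (ℤ → G) × ℤ) : (ℤ → G) × ℤ :=
  (fun a => x.1 a * y.1 (a - x.2), x.2 + y.2)

/-- The finitely supported function placing the single element `v` at
position `c ∈ ℤ`. -/
def placed {G : Type*} [One G] (c : ℤ) (v : G) : ℤ → G :=
  fun n => if n = c then v else 1

lemma placed_finite {G : Type*} [One G] (c : ℤ) (v : G) :
    (Function.mulSupport (placed c v)).Finite := by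
  apply Set.Finite.subset (Set.finite_singleton c)
  intro n hn
  rw [Function.mem_mulSupport] at hn
  by_contra hnc
  exact hn (if_neg (by simpa using hnc))

lemma one_finite (G : Type*) [Group G] :
    (Function.mulSupport (fun _ : ℤ => (1 : G))).Finite := by
  apply Set.Finite.subset (Set.finite_empty)
  intro n hn
  rw [Function.mem_mulSupport] at hn
  exact hn rfl

/-!
Under the bijection `ℤ ≃ ℤ × Fin d`, `m ↦ (m / d, m % d)`, a finitely supported function
`ℤ → Gᵈ` is the same as a finitely supported function `ℤ → G`: coordinate `j` at position `q`
goes to position `q d + j`. Shifting by `n` on the left corresponds to shifting by `d n` on the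
right, so interleaving the coordinates and multiplying the `ℤ`-component by `d` turns the wreath
product multiplication of `Gᵈ ≀ ℤ` into that of `G ≀ ℤ`.
-/

open Function

section Interleave

variable {G : Type*} (d : ℕ) [NeZero d]

def interleave (f : ℤ → Fin d → G) : ℤ → G :=
  uncurry f ∘ Int.divModEquiv d

@[simp]
lemma interleave_divModEquiv_symm (f : ℤ → Fin d → G) (p : ℤ × Fin d) :
    interleave d f ((Int.divModEquiv d).symm p) = f p.1 p.2 := by
  simp only [interleave, comp_apply, Equiv.apply_symm_apply]
  rfl

lemma interleave_injective : Injective (interleave (G := G) d) := fun f g h => by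
  funext q j
  simpa only [interleave_divModEquiv_symm] using congrFun h ((Int.divModEquiv d).symm (q, j))

lemma divModEquiv_symm_sub_mul (p : ℤ × Fin d) (n : ℤ) :
    (Int.divModEquiv d).symm p - d * n = (Int.divModEquiv d).symm (p.1 - n, p.2) := by
  simp only [Int.divModEquiv_symm_apply]
  ring

def interleavePair (x : (ℤ → Fin d → G) × ℤ) : (ℤ → G) × ℤ :=
  (interleave d x.1, d * x.2)

lemma interleavePair_injective : Injective (interleavePair (G := G) d) := by
  rintro ⟨f, n⟩ ⟨g, k⟩ h
  simp only [interleavePair, Prod.mk.injEq] at h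
  exact Prod.ext (interleave_injective d h.1)
    (mul_left_cancel₀ (Nat.cast_ne_zero.mpr (NeZero.ne d)) h.2)

lemma mulSupport_interleave_finite [One G] {f : ℤ → Fin d → G}
    (hf : (mulSupport f).Finite) : (mulSupport (interleave d f)).Finite := by
  rw [interleave, mulSupport_comp_eq_preimage]
  exact Set.Finite.preimage (Int.divModEquiv d).injective.injOn
    ((hf.prod Set.finite_univ).subset fun p hp => ⟨fun hp₁ => hp (congrFun hp₁ p.2), trivial⟩)

lemma interleave_placed_zero [One G] (i : Fin d) (a : G) :
    interleave d (placed 0 (fun j => if j = i then a else 1)) = placed (i : ℤ) a := by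
  refine funext ((Int.divModEquiv d).symm.surjective.forall.mpr fun p => ?_)
  have hi : (i : ℤ) = (Int.divModEquiv d).symm (0, i) := by simp
  simp only [interleave_divModEquiv_symm, placed, hi, (Int.divModEquiv d).symm.injective.eq_iff,
    Prod.ext_iff]
  split_ifs <;> simp_all

end Interleave

lemma interleavePair_wmulZ {G : Type*} [Group G] (d : ℕ) [NeZero d]
    (x y : (ℤ → Fin d → G) × ℤ) :
    interleavePair d (wmulZ x y) = wmulZ (interleavePair d x) (interleavePair d y) := by
  refine Prod.ext (funext ((Int.divModEquiv d).symm.surjective.forall.mpr fun p => ?_)) ?_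
  · simp only [interleavePair, wmulZ, divModEquiv_symm_sub_mul, interleave_divModEquiv_symm,
      Pi.mul_apply]
  · simp only [interleavePair, wmulZ]
    ring

/-- The wreath product `Gᵈ ≀ ℤ` embeds into `G ≀ ℤ` via an injective group
homomorphism `φ` with `φ(t) = t^d` (where `t` is the generator of `ℤ`) and
`φ(a) = t^i a t^{-i}` for an element `a` of the `i`-th copy of `G`
(sitting at the origin), `0 ≤ i ≤ d - 1`. Elements of `G ≀ ℤ` are modelled as
pairs in `(ℤ → G) × ℤ` with finitely supported function part, with
multiplication `wmulZ`. -/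
theorem stmt18 {G : Type*} [Group G] (d : ℕ) (hd : 1 ≤ d) :
    ∃ φ : {x : (ℤ → (Fin d → G)) × ℤ // (Function.mulSupport x.1).Finite} →
          {x : (ℤ → G) × ℤ // (Function.mulSupport x.1).Finite},
      Function.Injective φ ∧
      (∀ x y z, z.1 = wmulZ x.1 y.1 → (φ z).1 = wmulZ (φ x).1 (φ y).1) ∧
      (φ ⟨((fun _ => 1), 1), one_finite _⟩ = ⟨((fun _ => 1), (d : ℤ)), one_finite G⟩) ∧
      (∀ i : Fin d, ∀ a : G,
        φ ⟨(placed 0 (fun j => if j = i then a else 1), 0),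
            placed_finite 0 _⟩ =
          ⟨(placed (i : ℤ) a, 0), placed_finite (i : ℤ) a⟩) := by
  have : NeZero d := ⟨by omega⟩
  refine ⟨Subtype.map (interleavePair d) fun x => mulSupport_interleave_finite d,
    Subtype.map_injective _ (interleavePair_injective d), ?_, ?_, ?_⟩
  · rintro x y z hz
    simp only [Subtype.map, hz, interleavePair_wmulZ]
  · exact Subtype.ext (Prod.ext rfl (mul_one _))
  · intro i a
    exact Subtype.ext (Prod.ext (interleave_placed_zero d i a) (mul_zero _))
end
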